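/- Let (V, d) be a quasi-metric space on a four-element set whose betweenness B(d) is nonempty, and suppose some point w ∈ V occurs in no triple of B(d). Then (V, d) has at least four distinct lines. In particular, every quasi-metric space on four points with no universal line and at most three lines has the property that every point occurs in some triple of its betweenness. -/

import Mathlib

/-! If a point `w` occurs in no betweenness triple, then `line(w,u) = {w,u}` for every
`u ≠ w`, and `w` lies on no line through two other points. Hence for any three further points
`a, b, c` the lines `{w,a}`, `{w,b}`, `{w,c}` and `line(a,b)` are pairwise distinct. Such points
are supplied by a betweenness triple in the first part and by the four-point hypothesis in the
second. -/

/-- A quasi-metric on `V`: nonnegative, vanishing exactly on the diagonal,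
and satisfying the (directed) triangle inequality. -/
def IsQuasiMetric {V : Type*} (d : V → V → ℝ) : Prop :=
  (∀ x y, 0 ≤ d x y) ∧ (∀ x y, d x y = 0 ↔ x = y) ∧ (∀ x y z, d x z ≤ d x y + d y z)

/-- Betweenness: `y` lies between `x` and `z` (all three pairwise distinct). -/
def BtwQM {V : Type*} (d : V → V → ℝ) (x y z : V) : Prop :=
  x ≠ y ∧ y ≠ z ∧ x ≠ z ∧ d x z = d x y + d y z

/-- The line through `x` and `y`. -/
def lineQM {V : Type*} (d : V → V → ℝ) (x y : V) : Set V :=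
  {z | d z y = d z x + d x y ∨ d x y = d x z + d z y ∨ d x z = d x y + d y z}

/-- The set of all lines of the space. -/
def linesQM {V : Type*} (d : V → V → ℝ) : Set (Set V) :=
  {ℓ | ∃ x y, x ≠ y ∧ ℓ = lineQM d x y}

section QuasiMetric

variable {V : Type*} {d : V → V → ℝ}

lemma left_mem_lineQM (hd : IsQuasiMetric d) (x y : V) : x ∈ lineQM d x y := by
  simp [lineQM, (hd.2.1 x x).2 rfl]

lemma right_mem_lineQM (hd : IsQuasiMetric d) (x y : V) : y ∈ lineQM d x y := by
  simp [lineQM, (hd.2.1 y y).2 rfl]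

lemma btwQM_of_mem_lineQM {x y z : V} (hxy : x ≠ y) (hzx : z ≠ x) (hzy : z ≠ y)
    (hz : z ∈ lineQM d x y) : BtwQM d z x y ∨ BtwQM d x z y ∨ BtwQM d x y z := by
  rcases hz with h | h | h
  · exact Or.inl ⟨hzx, hxy, hzy, h⟩
  · exact Or.inr (Or.inl ⟨hzx.symm, hzy, hxy, h⟩)
  · exact Or.inr (Or.inr ⟨hxy, hzy.symm, hzx.symm, h⟩)

variable {w : V} (hw : ∀ x y z : V, BtwQM d x y z → w ≠ x ∧ w ≠ y ∧ w ≠ z)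
include hw

lemma lineQM_eq_pair_of_forall_btwQM_ne (hd : IsQuasiMetric d) {u : V} (hwu : w ≠ u) :
    lineQM d w u = {w, u} := by
  refine Set.Subset.antisymm (fun z hz => ?_) (Set.insert_subset_iff.2
    ⟨left_mem_lineQM hd w u, Set.singleton_subset_iff.2 (right_mem_lineQM hd w u)⟩)
  by_contra hzwu
  simp only [Set.mem_insert_iff, Set.mem_singleton_iff, not_or] at hzwu
  rcases btwQM_of_mem_lineQM hwu hzwu.1 hzwu.2 hz with h | h | h
  · exact (hw _ _ _ h).2.1 rfl
  · exact (hw _ _ _ h).1 rfl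
  · exact (hw _ _ _ h).1 rfl

lemma notMem_lineQM_of_forall_btwQM_ne {a b : V} (hab : a ≠ b) (hwa : w ≠ a) (hwb : w ≠ b) :
    w ∉ lineQM d a b := fun hmem => by
  rcases btwQM_of_mem_lineQM hab hwa hwb hmem with h | h | h
  · exact (hw _ _ _ h).1 rfl
  · exact (hw _ _ _ h).2.1 rfl
  · exact (hw _ _ _ h).2.2 rfl

lemma four_le_ncard_linesQM_of_forall_btwQM_ne [Finite V] (hd : IsQuasiMetric d) {a b c : V}
    (hab : a ≠ b) (hac : a ≠ c) (hbc : b ≠ c) (hwa : w ≠ a) (hwb : w ≠ b) (hwc : w ≠ c) :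
    4 ≤ (linesQM d).ncard := by
  have hpair : ∀ u, w ≠ u → ({w, u} : Set V) ∈ linesQM d :=
    fun u hwu => ⟨w, u, hwu, (lineQM_eq_pair_of_forall_btwQM_ne hw hd hwu).symm⟩
  have hwab := notMem_lineQM_of_forall_btwQM_ne hw hab hwa hwb
  have hne : ∀ u, ({w, u} : Set V) ≠ lineQM d a b := fun u h => hwab (h ▸ by simp)
  have hsub : ({{w, a}, {w, b}, {w, c}, lineQM d a b} : Set (Set V)) ⊆ linesQM d := by
    simp only [Set.insert_subset_iff, Set.singleton_subset_iff]
    exact ⟨hpair a hwa, hpair b hwb, hpair c hwc, a, b, hab, rfl⟩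
  calc 4 = ({{w, a}, {w, b}, {w, c}, lineQM d a b} : Set (Set V)).ncard := by
        rw [Set.ncard_insert_of_notMem, Set.ncard_insert_of_notMem, Set.ncard_insert_of_notMem,
          Set.ncard_singleton] <;>
        simp [Set.pair_eq_pair_iff, hne, hab, hac, hbc, hwa.symm, hwb.symm]
    _ ≤ (linesQM d).ncard := Set.ncard_le_ncard hsub

end QuasiMetric

lemma exists_three_ne_of_card_eq_four {V : Type*} [Fintype V] (hcard : Fintype.card V = 4)
    (w : V) : ∃ a b c : V, a ≠ b ∧ a ≠ c ∧ b ≠ c ∧ w ≠ a ∧ w ≠ b ∧ w ≠ c := by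
  classical
  have h3 : 2 < (Finset.univ.erase w).card := by
    rw [Finset.card_erase_of_mem (Finset.mem_univ w), Finset.card_univ, hcard]
    norm_num
  obtain ⟨a, b, c, ha, hb, hc, hab, hac, hbc⟩ := Finset.two_lt_card_iff.1 h3
  exact ⟨a, b, c, hab, hac, hbc, (Finset.ne_of_mem_erase ha).symm,
    (Finset.ne_of_mem_erase hb).symm, (Finset.ne_of_mem_erase hc).symm⟩

/-- in a quasi-metric space on four points with nonempty
betweenness, if some point occurs in no triple of the betweenness, then the space
has at least four distinct lines.  In particular, in a quasi-metric space on four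
points with no universal line and at most three lines, every point occurs in some
triple of the betweenness. -/
theorem stmt_17 :
    (∀ (V : Type) (_ : Fintype V), Fintype.card V = 4 →
      ∀ d : V → V → ℝ, IsQuasiMetric d →
      (∃ x y z : V, BtwQM d x y z) →
      ∀ w : V, (∀ x y z : V, BtwQM d x y z → w ≠ x ∧ w ≠ y ∧ w ≠ z) →
      4 ≤ (linesQM d).ncard) ∧
    (∀ (V : Type) (_ : Fintype V), Fintype.card V = 4 →
      ∀ d : V → V → ℝ, IsQuasiMetric d →
      (∀ x y : V, x ≠ y → lineQM d x y ≠ Set.univ) →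
      (linesQM d).ncard ≤ 3 →
      ∀ w : V, ∃ x y z : V, BtwQM d x y z ∧ (w = x ∨ w = y ∨ w = z)) := by
  constructor
  · intro V _ _ d hd ⟨a, b, c, habc⟩ w hw
    obtain ⟨hwa, hwb, hwc⟩ := hw a b c habc
    exact four_le_ncard_linesQM_of_forall_btwQM_ne hw hd habc.1 habc.2.2.1 habc.2.1 hwa hwb hwc
  · intro V _ hcard d hd _ hle w
    by_contra hcon
    push Not at hcon
    obtain ⟨a, b, c, hab, hac, hbc, hwa, hwb, hwc⟩ := exists_three_ne_of_card_eq_four hcard w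
    have := four_le_ncard_linesQM_of_forall_btwQM_ne hcon hd hab hac hbc hwa hwb hwc
    omega
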